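/- arXiv:2207.07808 — 2 statements merged into one kernel-verified Lean document; each statement's English description precedes it below -/
import Mathlib

section
/- Let A be a closed operator on a complex Banach space, μ ∈ σ(A), λ ∈ ρ(A), λ_μ = (λ-μ)^{-1}. If ξ satisfies (R_λ(A) - λ_μ)^k ξ = 0 for some k ≥ 1, then ξ lies in the domain of A^k and (A - μ)^k ξ = 0; hence GE_{λ_μ}(R_λ(A)) ⊆ GE_μ(A), and combined with the forward inclusion, GE_μ(A) = GE_{λ_μ}(R_λ(A)). -/
/-- If `(R_lam(A) - lamμ)^k ξ = 0` for some `k ≥ 1`, where `lamμ = (lam - μ)⁻¹`,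
then `(A - μ)^k ξ = 0`; hence `GE_{lamμ}(R_lam(A)) ⊆ GE_μ(A)`, and combined with the
forward inclusion, `GE_μ(A) = GE_{lamμ}(R_lam(A))`. -/
theorem resolvent_generalized_eigenspace_subset_generalized_eigenspace
    {X : Type*} [NormedAddCommGroup X] [NormedSpace ℂ X] [CompleteSpace X]
    (A : X →ₗ[ℂ] X) (μ lam : ℂ)
    (hμ : μ ∈ spectrum ℂ A) (hlam : lam ∈ resolventSet ℂ A)
    (ξ : X) (k : ℕ) (hk : 1 ≤ k)
    (hξ : (((Ring.inverse (lam • (1 : X →ₗ[ℂ] X) - A)) - (lam - μ)⁻¹ • (1 : X →ₗ[ℂ] X)) ^ k) ξ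
      = 0) :
    ((A - μ • (1 : X →ₗ[ℂ] X)) ^ k) ξ = 0 := by
  set B : X →ₗ[ℂ] X := lam • (1 : X →ₗ[ℂ] X) - A with hB
  have hunit : IsUnit B := by
    have := hlam
    rw [resolventSet, Set.mem_setOf_eq] at this
    simpa [Algebra.algebraMap_eq_smul_one, hB] using this
  set R : X →ₗ[ℂ] X := Ring.inverse B with hR
  have hRB : R * B = 1 := Ring.inverse_mul_cancel B hunit
  have hBR : B * R = 1 := Ring.mul_inverse_cancel B hunit
  have hlamμ : lam ≠ μ := by
    intro h
    apply spectrum.mem_iff.mp hμ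
    rw [← h]
    simpa [Algebra.algebraMap_eq_smul_one, hB] using hunit
  have hne : lam - μ ≠ 0 := sub_ne_zero.mpr hlamμ
  set c : ℂ := (lam - μ)⁻¹ with hcdef
  have hc : c * (lam - μ) = 1 := inv_mul_cancel₀ hne
  have hcne : c ≠ 0 := inv_ne_zero hne
  have h1 : c • (A - μ • (1 : X →ₗ[ℂ] X)) = 1 - c • B := by
    rw [hB, hcdef]
    match_scalars
    · ring
    · field_simp
      ring
  have key : R - c • 1 = c • (R * (A - μ • (1 : X →ₗ[ℂ] X))) := by
    rw [← mul_smul_comm, h1, mul_sub, mul_one, mul_smul_comm, hRB]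
  have hcommB : Commute R B := by
    unfold Commute SemiconjBy
    rw [hRB, hBR]
  have hcommA : Commute R A := by
    have hA : A = lam • (1 : X →ₗ[ℂ] X) - B := by rw [hB]; abel
    rw [hA]
    exact ((Commute.one_right R).smul_right lam).sub_right hcommB
  have hcomm : Commute R (A - μ • (1 : X →ₗ[ℂ] X)) :=
    hcommA.sub_right ((Commute.one_right R).smul_right μ)
  have main : B ^ k * (R - c • 1) ^ k = c ^ k • (A - μ • (1 : X →ₗ[ℂ] X)) ^ k := by
    rw [key, smul_pow, hcomm.mul_pow, mul_smul_comm, ← mul_assoc,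
      ← (hcommB.symm).mul_pow, hBR, one_pow, one_mul]
  have happ : (B ^ k * (R - c • 1) ^ k) ξ = 0 := by
    rw [Module.End.mul_apply, hξ, map_zero]
  rw [main, LinearMap.smul_apply] at happ
  exact (smul_eq_zero_iff_right (pow_ne_zero k hcne)).mp happ
end

section
/- With K = {(x,y,z) ∈ ℝ³ : z ≥ √(x²+y²)} and A(x,y,z) = (−y, x, 0), for every λ > 0 the resolvent R_λ = (λI − A)^{-1} maps K ∖ {0} into the interior of K: if z = √(x²+y²) with (x,y,z) ≠ 0 or z > √(x²+y²), then the image (x̃,ỹ,z̃) satisfies z̃ > √(x̃² + ỹ²). -/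
noncomputable def iceR (lam : ℝ) : (Fin 3 → ℝ) →ₗ[ℝ] (Fin 3 → ℝ) where
  toFun v := ![(lam * v 0 - v 1) / (1 + lam ^ 2),
               (v 0 + lam * v 1) / (1 + lam ^ 2), v 2 / lam]
  map_add' u v := by
    funext i; fin_cases i <;> simp <;> ring
  map_smul' c v := by
    funext i; fin_cases i <;> simp <;> ring

/-- For the ice-cream cone `K = {(x,y,z) : z ≥ √(x²+y²)}` and `A(x,y,z) = (-y, x, 0)`,
for every `lam > 0` the resolvent `(lam • I - A)⁻¹` maps `K ∖ {0}` into the interior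
of `K`: the image `(x̃, ỹ, z̃)` satisfies `z̃ > √(x̃² + ỹ²)`. -/
theorem icecream_cone_resolvent_strongly_positive
    (A : (Fin 3 → ℝ) →ₗ[ℝ] (Fin 3 → ℝ))
    (hA : ∀ v : Fin 3 → ℝ, A v = ![-(v 1), v 0, 0])
    (K : Set (Fin 3 → ℝ))
    (hK : K = {v : Fin 3 → ℝ | Real.sqrt ((v 0) ^ 2 + (v 1) ^ 2) ≤ v 2}) :
    ∀ lam : ℝ, 0 < lam →
      ∃ R : (Fin 3 → ℝ) →ₗ[ℝ] (Fin 3 → ℝ),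
        R ∘ₗ (lam • (LinearMap.id : (Fin 3 → ℝ) →ₗ[ℝ] (Fin 3 → ℝ)) - A) = LinearMap.id ∧
        (lam • (LinearMap.id : (Fin 3 → ℝ) →ₗ[ℝ] (Fin 3 → ℝ)) - A) ∘ₗ R = LinearMap.id ∧
        ∀ v ∈ K, v ≠ 0 →
          Real.sqrt (((R v) 0) ^ 2 + ((R v) 1) ^ 2) < (R v) 2 := by
  intro lam hlam
  have hlam0 : lam ≠ 0 := ne_of_gt hlam
  have hden : (1 : ℝ) + lam ^ 2 ≠ 0 := by positivity
  refine ⟨iceR lam, ?_, ?_, ?_⟩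
  · apply LinearMap.ext; intro v
    funext i
    fin_cases i <;>
      simp [iceR, hA, LinearMap.sub_apply, LinearMap.smul_apply] <;>
      field_simp <;> ring
  · apply LinearMap.ext; intro v
    funext i
    fin_cases i <;>
      simp [iceR, hA, LinearMap.sub_apply, LinearMap.smul_apply] <;>
      field_simp <;> ring
  · intro v hv hv0
    subst hK
    set x := v 0; set y := v 1; set z := v 2
    have hvK : Real.sqrt (x ^ 2 + y ^ 2) ≤ z := hv
    have hz0 : 0 ≤ z := le_trans (Real.sqrt_nonneg _) hvK
    have hsum : (iceR lam v 0) ^ 2 + (iceR lam v 1) ^ 2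
        = (x ^ 2 + y ^ 2) / (1 + lam ^ 2) := by
      simp only [iceR, LinearMap.coe_mk, AddHom.coe_mk]
      simp only [Matrix.cons_val_zero, Matrix.cons_val_one, Matrix.head_cons]
      field_simp
      ring
    have hz2 : iceR lam v 2 = z / lam := by
      simp [iceR]; rfl
    rw [hsum, hz2]
    have hzpos : 0 < z := by
      rcases lt_or_eq_of_le hz0 with h | h
      · exact h
      · exfalso
        have hxy : x ^ 2 + y ^ 2 = 0 := by
          have := Real.sqrt_le_sqrt (le_of_eq (rfl : x ^ 2 + y ^ 2 = x ^ 2 + y ^ 2))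
          nlinarith [Real.sq_sqrt (by positivity : (0:ℝ) ≤ x ^ 2 + y ^ 2),
            Real.sqrt_nonneg (x ^ 2 + y ^ 2), hvK]
        apply hv0
        funext i
        fin_cases i
        · show x = 0; nlinarith
        · show y = 0; nlinarith
        · show z = 0; exact h.symm
    rw [Real.sqrt_lt' (div_pos hzpos hlam)]
    have hle : x ^ 2 + y ^ 2 ≤ z ^ 2 := by
      nlinarith [Real.sq_sqrt (by positivity : (0:ℝ) ≤ x ^ 2 + y ^ 2),
        Real.sqrt_nonneg (x ^ 2 + y ^ 2), hvK]
    rw [div_pow, div_lt_div_iff₀ (by positivity) (by positivity)]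
    nlinarith [mul_le_mul_of_nonneg_right hle (sq_nonneg lam), sq_nonneg z]
end
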